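/- For every λ > 0 there exists C > 0 such that for all x, y, t ∈ (0,∞), |D_{λ,x} P_t^λ(x,y)| ≤ (C/t) · P_t^λ(x,y), where D_{λ,x} := x^λ ∂_x x^{−λ}. -/

import Mathlib

/-!
Write `P_t^λ(x,y) = (2λ/π) t (xy)^λ ∫_0^π F(x,θ) dθ` with `F = sin^{2λ-1} θ / Q^{λ+1}` and
`Q = (x-y)² + t² + 2xy(1 - cos θ)`. The weight `x^{-λ}` in `D_{λ,x}` cancels the `x^λ` in front, so
`D_{λ,x} P_t^λ(x,y) = (2λ/π) t (xy)^λ ∫_0^π ∂_x F dθ`, and `∂_x F = -(λ+1) (∂_x Q / Q) F`.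
The elementary inequality `t |∂_x Q| ≤ 7 Q` gives
`|∂_x F| ≤ 7(λ+1)/t · F` pointwise, which integrates to the claim with `C = 7(λ+1)`.
Differentiation under the integral sign is justified by the domination
`F ≤ sin^{2λ-1} θ / t^{2λ+2}`, integrable on `[0, π]` because `2λ - 1 > -1`.
-/

open Real MeasureTheory Set Filter

/-- The Bessel Poisson kernel `P_t^λ(x,y)`. -/
noncomputable def besselPoissonKernel (lam x y t : ℝ) : ℝ :=
  (2 * lam / π) * t * (x * y) ^ lam *
    ∫ θ in (0:ℝ)..π,
      (Real.sin θ) ^ (2 * lam - 1) /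
        ((x - y) ^ 2 + t ^ 2 + 2 * x * y * (1 - Real.cos θ)) ^ (lam + 1)

lemma rpow_sin_le_of_mem_Ioc {p θ : ℝ} (hθ : θ ∈ Ioc 0 (π / 2)) :
    sin θ ^ p ≤ (2 / π) ^ p * θ ^ p + 1 := by
  obtain ⟨hθ0, hθπ⟩ := hθ
  have hsin : 0 ≤ sin θ := sin_nonneg_of_nonneg_of_le_pi hθ0.le (by linarith [pi_pos])
  rcases le_or_gt 0 p with hp | hp
  · have : sin θ ^ p ≤ 1 := rpow_le_one hsin (sin_le_one θ) hp
    have : 0 ≤ (2 / π) ^ p * θ ^ p := by positivity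
    linarith
  · calc sin θ ^ p ≤ (2 / π * θ) ^ p :=
          rpow_le_rpow_of_nonpos (by positivity) (mul_le_sin hθ0.le hθπ) hp.le
      _ = (2 / π) ^ p * θ ^ p := mul_rpow (by positivity) hθ0.le
      _ ≤ (2 / π) ^ p * θ ^ p + 1 := by linarith

lemma intervalIntegrable_rpow_sin {p : ℝ} (hp : -1 < p) :
    IntervalIntegrable (fun θ => sin θ ^ p) volume 0 π := by
  have hleft : IntervalIntegrable (fun θ => sin θ ^ p) volume 0 (π / 2) := by
    refine (((intervalIntegral.intervalIntegrable_rpow' hp).const_mul ((2 / π) ^ p)).add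
      (intervalIntegrable_const (c := 1))).mono_fun
      (by fun_prop : Measurable _).aestronglyMeasurable ?_
    rw [EventuallyLE, ae_restrict_iff' measurableSet_uIoc]
    refine ae_of_all _ fun θ hθ => ?_
    rw [uIoc_of_le (by positivity)] at hθ
    rw [norm_of_nonneg (rpow_nonneg (sin_nonneg_of_nonneg_of_le_pi hθ.1.le
      (by linarith [hθ.2, pi_pos])) p)]
    exact (rpow_sin_le_of_mem_Ioc hθ).trans (le_abs_self _)
  have hright : IntervalIntegrable (fun θ => sin θ ^ p) volume (π / 2) π := by
    simpa [sin_pi_sub, sub_half] using (hleft.comp_sub_left π).symm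
  exact hleft.trans hright

lemma sin_nonneg_of_mem_uIoc {θ : ℝ} (hθ : θ ∈ uIoc 0 π) : 0 ≤ sin θ := by
  rw [uIoc_of_le pi_pos.le] at hθ
  exact sin_nonneg_of_nonneg_of_le_pi hθ.1.le hθ.2

section Integrand

variable (lam x y t θ : ℝ)

noncomputable def besselPoissonDenom : ℝ := (x - y) ^ 2 + t ^ 2 + 2 * x * y * (1 - cos θ)

noncomputable def besselPoissonDenomDeriv : ℝ := 2 * (x - y) + 2 * y * (1 - cos θ)

noncomputable def besselPoissonIntegrand : ℝ :=
  sin θ ^ (2 * lam - 1) / besselPoissonDenom x y t θ ^ (lam + 1)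

noncomputable def besselPoissonIntegrandDeriv : ℝ :=
  -(lam + 1) * besselPoissonDenomDeriv x y θ / besselPoissonDenom x y t θ *
    besselPoissonIntegrand lam x y t θ

lemma besselPoissonKernel_eq :
    besselPoissonKernel lam x y t =
      (2 * lam / π) * t * (x * y) ^ lam * ∫ θ in (0:ℝ)..π, besselPoissonIntegrand lam x y t θ :=
  rfl

variable {lam x y t θ}

lemma sq_le_besselPoissonDenom (hx : 0 ≤ x) (hy : 0 ≤ y) :
    t ^ 2 ≤ besselPoissonDenom x y t θ := by
  have : 0 ≤ x * y * (1 - cos θ) := mul_nonneg (mul_nonneg hx hy) (by linarith [cos_le_one θ])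
  unfold besselPoissonDenom
  nlinarith [sq_nonneg (x - y)]

lemma besselPoissonDenom_pos (hx : 0 ≤ x) (hy : 0 ≤ y) (ht : 0 < t) :
    0 < besselPoissonDenom x y t θ :=
  (pow_pos ht 2).trans_le (sq_le_besselPoissonDenom hx hy)

lemma mul_abs_besselPoissonDenomDeriv_le (hx : 0 ≤ x) (hy : 0 ≤ y) (ht : 0 ≤ t) :
    t * |besselPoissonDenomDeriv x y θ| ≤ 7 * besselPoissonDenom x y t θ := by
  unfold besselPoissonDenom besselPoissonDenomDeriv
  set c := cos θ
  have hc : 0 ≤ 1 - c := by linarith [cos_le_one θ]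
  have hc' : 1 - c ≤ 2 := by linarith [neg_one_le_cos θ]
  have htri : |2 * (x - y) + 2 * y * (1 - c)| ≤ 2 * |x - y| + 2 * y * (1 - c) := by
    refine (abs_add_le _ _).trans_eq ?_
    rw [abs_mul, abs_mul, abs_two, abs_of_nonneg (by positivity : 0 ≤ 2 * y), abs_of_nonneg hc]
  have hyx : y ≤ x + |x - y| := by linarith [neg_abs_le (x - y)]
  have hxy := sq_abs (x - y)
  have hxyc : 0 ≤ x * y * (1 - c) := by positivity
  refine (mul_le_mul_of_nonneg_left htri ht).trans ?_
  -- `t y (1 - c)` is absorbed by `x y (1 - c)` when `t ≤ x`, and otherwise, since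
  -- `y ≤ t + |x - y|` and `1 - c ≤ 2`, by `2 t (t + |x - y|)`.
  rcases le_total x t with hxt | htx
  · nlinarith [abs_nonneg (x - y), sq_nonneg (|x - y| - t), sq_nonneg (x - t), mul_nonneg ht hc]
  · nlinarith [abs_nonneg (x - y), sq_nonneg (|x - y| - t),
      mul_nonneg (mul_nonneg hy hc) (sub_nonneg.2 htx)]

lemma hasDerivAt_besselPoissonDenom :
    HasDerivAt (fun u => besselPoissonDenom u y t θ) (besselPoissonDenomDeriv x y θ) x :=
  (((((hasDerivAt_id' x).sub_const y).fun_pow 2).add_const (t ^ 2)).fun_add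
    ((((hasDerivAt_id' x).const_mul 2).mul_const y).mul_const (1 - cos θ))).congr_deriv
    (by simp only [besselPoissonDenomDeriv]; ring)

lemma hasDerivAt_besselPoissonIntegrand (hx : 0 ≤ x) (hy : 0 ≤ y) (ht : 0 < t) :
    HasDerivAt (fun u => besselPoissonIntegrand lam u y t θ)
      (besselPoissonIntegrandDeriv lam x y t θ) x := by
  have hD := besselPoissonDenom_pos (θ := θ) hx hy ht
  have hpow := (hasDerivAt_besselPoissonDenom (x := x) (y := y) (t := t) (θ := θ)).rpow_const
    (p := lam + 1) (Or.inl hD.ne')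
  refine ((hasDerivAt_const x (sin θ ^ (2 * lam - 1))).div hpow (by positivity)).congr_deriv ?_
  rw [add_sub_cancel_right]
  simp only [besselPoissonIntegrandDeriv, besselPoissonIntegrand]
  rw [rpow_add_one hD.ne']
  field_simp
  ring

lemma besselPoissonIntegrand_nonneg (hx : 0 ≤ x) (hy : 0 ≤ y) (hsin : 0 ≤ sin θ) :
    0 ≤ besselPoissonIntegrand lam x y t θ :=
  div_nonneg (rpow_nonneg hsin _)
    (rpow_nonneg ((sq_nonneg t).trans (sq_le_besselPoissonDenom hx hy)) _)

lemma besselPoissonIntegrand_le (hlam : -1 ≤ lam) (hx : 0 ≤ x) (hy : 0 ≤ y) (ht : 0 < t)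
    (hsin : 0 ≤ sin θ) :
    besselPoissonIntegrand lam x y t θ ≤ sin θ ^ (2 * lam - 1) / (t ^ 2) ^ (lam + 1) :=
  div_le_div_of_nonneg_left (rpow_nonneg hsin _) (by positivity)
    (rpow_le_rpow (by positivity) (sq_le_besselPoissonDenom hx hy) (by linarith))

lemma abs_besselPoissonIntegrandDeriv_le (hlam : -1 ≤ lam) (hx : 0 ≤ x) (hy : 0 ≤ y)
    (ht : 0 < t) (hsin : 0 ≤ sin θ) :
    |besselPoissonIntegrandDeriv lam x y t θ| ≤
      7 * (lam + 1) / t * besselPoissonIntegrand lam x y t θ := by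
  have hD := besselPoissonDenom_pos (θ := θ) hx hy ht
  have hF := besselPoissonIntegrand_nonneg (lam := lam) (t := t) hx hy hsin
  have hlam' : 0 ≤ lam + 1 := by linarith
  have hquot : |besselPoissonDenomDeriv x y θ| / besselPoissonDenom x y t θ ≤ 7 / t := by
    rw [div_le_div_iff₀ hD ht]
    linarith [mul_abs_besselPoissonDenomDeriv_le (θ := θ) hx hy ht.le]
  calc |besselPoissonIntegrandDeriv lam x y t θ|
      = (lam + 1) * (|besselPoissonDenomDeriv x y θ| / besselPoissonDenom x y t θ) *
          besselPoissonIntegrand lam x y t θ := by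
        rw [besselPoissonIntegrandDeriv, abs_mul, abs_div, abs_mul, abs_neg, abs_of_nonneg hlam',
          abs_of_pos hD, abs_of_nonneg hF]
        ring
    _ ≤ (lam + 1) * (7 / t) * besselPoissonIntegrand lam x y t θ := by gcongr
    _ = 7 * (lam + 1) / t * besselPoissonIntegrand lam x y t θ := by ring

lemma measurable_besselPoissonIntegrand : Measurable (besselPoissonIntegrand lam x y t) := by
  unfold besselPoissonIntegrand besselPoissonDenom
  fun_prop

lemma measurable_besselPoissonIntegrandDeriv :
    Measurable (besselPoissonIntegrandDeriv lam x y t) := by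
  unfold besselPoissonIntegrandDeriv besselPoissonIntegrand besselPoissonDenom
    besselPoissonDenomDeriv
  fun_prop

end Integrand

section Integral

variable {lam x y t : ℝ}

lemma intervalIntegrable_besselPoissonIntegrand (hlam : 0 < lam) (hx : 0 ≤ x) (hy : 0 ≤ y)
    (ht : 0 < t) : IntervalIntegrable (besselPoissonIntegrand lam x y t) volume 0 π := by
  refine ((intervalIntegrable_rpow_sin (p := 2 * lam - 1) (by linarith)).div_const
    ((t ^ 2) ^ (lam + 1))).mono_fun measurable_besselPoissonIntegrand.aestronglyMeasurable ?_
  rw [EventuallyLE, ae_restrict_iff' measurableSet_uIoc]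
  refine ae_of_all _ fun θ hθ => ?_
  have hsin := sin_nonneg_of_mem_uIoc hθ
  rw [norm_of_nonneg (besselPoissonIntegrand_nonneg hx hy hsin)]
  exact (besselPoissonIntegrand_le (by linarith) hx hy ht hsin).trans (le_abs_self _)

lemma hasDerivAt_integral_besselPoissonIntegrand (hlam : 0 < lam) (hx : 0 < x) (hy : 0 ≤ y)
    (ht : 0 < t) :
    HasDerivAt (fun u => ∫ θ in (0:ℝ)..π, besselPoissonIntegrand lam u y t θ)
      (∫ θ in (0:ℝ)..π, besselPoissonIntegrandDeriv lam x y t θ) x := by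
  refine (intervalIntegral.hasDerivAt_integral_of_dominated_loc_of_deriv_le
    (F := fun u θ => besselPoissonIntegrand lam u y t θ)
    (F' := fun u θ => besselPoissonIntegrandDeriv lam u y t θ)
    (bound := fun θ => 7 * (lam + 1) / t * (sin θ ^ (2 * lam - 1) / (t ^ 2) ^ (lam + 1)))
    (Ioi_mem_nhds hx) (Eventually.of_forall fun u => ?_)
    (intervalIntegrable_besselPoissonIntegrand hlam hx.le hy ht) ?_ ?_ ?_ ?_).2
  · exact measurable_besselPoissonIntegrand.aestronglyMeasurable
  · exact measurable_besselPoissonIntegrandDeriv.aestronglyMeasurable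
  · refine ae_of_all _ fun θ hθ u (hu : 0 < u) => ?_
    have hsin := sin_nonneg_of_mem_uIoc hθ
    rw [norm_eq_abs]
    refine (abs_besselPoissonIntegrandDeriv_le (by linarith) hu.le hy ht hsin).trans ?_
    gcongr
    exact besselPoissonIntegrand_le (by linarith) hu.le hy ht hsin
  · exact (((intervalIntegrable_rpow_sin (by linarith)).div_const _).const_mul _)
  · exact ae_of_all _ fun θ _ u (hu : 0 < u) => hasDerivAt_besselPoissonIntegrand hu.le hy ht

lemma abs_integral_besselPoissonIntegrandDeriv_le (hlam : 0 < lam) (hx : 0 ≤ x) (hy : 0 ≤ y)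
    (ht : 0 < t) :
    |∫ θ in (0:ℝ)..π, besselPoissonIntegrandDeriv lam x y t θ| ≤
      7 * (lam + 1) / t * ∫ θ in (0:ℝ)..π, besselPoissonIntegrand lam x y t θ := by
  rw [← intervalIntegral.integral_const_mul, ← norm_eq_abs]
  refine intervalIntegral.norm_integral_le_of_norm_le pi_pos.le (ae_of_all _ fun θ hθ => ?_)
    ((intervalIntegrable_besselPoissonIntegrand hlam hx hy ht).const_mul _)
  exact abs_besselPoissonIntegrandDeriv_le (by linarith) hx hy ht
    (sin_nonneg_of_mem_uIoc (Ioc_subset_uIoc hθ))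

lemma rpow_neg_mul_besselPoissonKernel (hx : 0 < x) (hy : 0 ≤ y) :
    x ^ (-lam) * besselPoissonKernel lam x y t =
      2 * lam / π * t * y ^ lam * ∫ θ in (0:ℝ)..π, besselPoissonIntegrand lam x y t θ := by
  rw [besselPoissonKernel_eq, mul_rpow hx.le hy, rpow_neg hx.le]
  field_simp

lemma hasDerivAt_rpow_neg_mul_besselPoissonKernel (hlam : 0 < lam) (hx : 0 < x) (hy : 0 ≤ y)
    (ht : 0 < t) :
    HasDerivAt (fun u => u ^ (-lam) * besselPoissonKernel lam u y t)
      (2 * lam / π * t * y ^ lam * ∫ θ in (0:ℝ)..π, besselPoissonIntegrandDeriv lam x y t θ) x :=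
  ((hasDerivAt_integral_besselPoissonIntegrand hlam hx hy ht).const_mul _).congr_of_eventuallyEq
    (eventually_gt_nhds hx |>.mono fun _ hu => rpow_neg_mul_besselPoissonKernel hu hy)

end Integral

theorem bessel_poisson_kernel_Dlam_bound (lam : ℝ) (hlam : 0 < lam) :
    ∃ C : ℝ, 0 < C ∧ ∀ x y t : ℝ, 0 < x → 0 < y → 0 < t →
      |x ^ lam * deriv (fun u : ℝ => u ^ (-lam) * besselPoissonKernel lam u y t) x| ≤
        (C / t) * besselPoissonKernel lam x y t := by
  refine ⟨7 * (lam + 1), by positivity, fun x y t hx hy ht => ?_⟩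
  rw [(hasDerivAt_rpow_neg_mul_besselPoissonKernel hlam hx hy.le ht).deriv, besselPoissonKernel_eq]
  calc |x ^ lam * (2 * lam / π * t * y ^ lam *
          ∫ θ in (0:ℝ)..π, besselPoissonIntegrandDeriv lam x y t θ)|
      = 2 * lam / π * t * (x * y) ^ lam *
          |∫ θ in (0:ℝ)..π, besselPoissonIntegrandDeriv lam x y t θ| := by
        rw [mul_rpow hx.le hy.le, ← mul_assoc, abs_mul, abs_of_pos (by positivity)]
        ring
    _ ≤ 2 * lam / π * t * (x * y) ^ lam *
          (7 * (lam + 1) / t * ∫ θ in (0:ℝ)..π, besselPoissonIntegrand lam x y t θ) := by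
        gcongr
        exact abs_integral_besselPoissonIntegrandDeriv_le hlam hx.le hy.le ht
    _ = _ := by ring
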